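/- arXiv:2205.13721 — 2 statements merged into one kernel-verified Lean document; each statement's English description precedes it below -/
import Mathlib

section
/- Let (R, m) be a Noetherian local ring with infinite residue field and E a finitely generated R-module with rank e and analytic spread ℓ. Suppose E admits a proper reduction, U is a minimal reduction of E, and E_p is of linear type for all primes p with ht(p) ≤ ℓ − e. Then the ideal (U :_R E) has height at least ℓ − e + 1, i.e., (U :_R E) is an ℓ-residual intersection of E. -/
noncomputable section
open Submodule IsLocalRing

universe u

/-- Minimal number of generators of a module. -/
def Module.mu (R M : Type*) [Semiring R] [AddCommMonoid M] [Module R M] : ℕ :=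
  sInf {n | ∃ s : Finset M, s.card = n ∧ Submodule.span R (s : Set M) = ⊤}

/-- Minimal number of generators of a submodule. -/
def Submodule.mu {R M : Type*} [Semiring R] [AddCommMonoid M] [Module R M]
    (U : Submodule R M) : ℕ :=
  sInf {n | ∃ s : Finset M, s.card = n ∧ ↑s ⊆ (U : Set M) ∧ Submodule.span R (s : Set M) = U}

/-- Height of an ideal: infimum of heights of primes containing it. -/
def Ideal.ht {R : Type*} [CommRing R] (I : Ideal R) : ℕ∞ :=
  ⨅ p ∈ {p : PrimeSpectrum R | I ≤ p.asIdeal}, Order.height p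

/-- `M` has rank `e`: `M ⊗_R Quot(R)` is free of rank `e` over the total quotient ring. -/
def Module.HasRank (R M : Type*) [CommRing R] [AddCommGroup M] [Module R M] (e : ℕ) : Prop :=
  Nonempty (Basis (Fin e) (FractionRing R) (LocalizedModule (nonZeroDivisors R) M))

/-- Minimal number of generators of the localization of `M` at a prime `p`. -/
def Module.muAt {R : Type*} [CommRing R] (p : PrimeSpectrum R) (M : Type*) [AddCommGroup M]
    [Module R M] : ℕ :=
  Module.mu (Localization.AtPrime p.asIdeal) (LocalizedModule p.asIdeal.primeCompl M)

/-- The condition `G_s`: `μ(M_p) ≤ dim R_p + e - 1` for all primes with `1 ≤ ht p ≤ s - 1`. -/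
def Module.SatisfiesG {R : Type*} [CommRing R] (M : Type*) [AddCommGroup M] [Module R M]
    (e s : ℕ) : Prop :=
  ∀ p : PrimeSpectrum R, 1 ≤ Order.height p → Order.height p + 1 ≤ (s : ℕ∞) →
    (Module.muAt p M : ℕ∞) + 1 ≤ Order.height p + e

/-- Grade of an ideal on a module: supremum of lengths of `M`-regular sequences in `I`. -/
def Ideal.grade {R : Type*} [CommRing R] (I : Ideal R) (M : Type*) [AddCommGroup M]
    [Module R M] : ℕ∞ :=
  sSup {n : ℕ∞ | ∃ rs : List R, (rs.length : ℕ∞) = n ∧ (∀ r ∈ rs, r ∈ I) ∧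
    RingTheory.Sequence.IsRegular M rs}

/-- Depth of a module over a local ring. -/
def Module.depth (R M : Type*) [CommRing R] [IsLocalRing R] [AddCommGroup M] [Module R M] : ℕ∞ :=
  (IsLocalRing.maximalIdeal R).grade M

/-- Cohen-Macaulay local ring: Noetherian local with depth equal to Krull dimension. -/
def IsCMLocalRing (R : Type*) [CommRing R] [IsLocalRing R] : Prop :=
  IsNoetherianRing R ∧ (Module.depth R R : WithBot ℕ∞) = ringKrullDim R

/-- Cohen-Macaulay ring: Noetherian and all localizations at primes are CM local rings. -/
def IsCMRing (R : Type*) [CommRing R] : Prop :=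
  IsNoetherianRing R ∧ ∀ p : PrimeSpectrum R,
    letI := p.2
    IsCMLocalRing (Localization.AtPrime p.asIdeal)

/-- Projective dimension at most `n`. -/
def ProjDimLE (R : Type u) [CommRing R] : ℕ → ∀ (M : Type u) [AddCommGroup M] [Module R M], Prop
  | 0 => fun M _ _ => Module.Projective R M
  | n+1 => fun M _ _ => ∃ (P : Type u) (_ : AddCommGroup P) (_ : Module R P) (f : P →ₗ[R] M),
      Module.Projective R P ∧ Function.Surjective f ∧ ProjDimLE R n (LinearMap.ker f)

/-- Injective dimension at most `n`. -/
def InjDimLE (R : Type u) [CommRing R] : ℕ → ∀ (M : Type u) [AddCommGroup M] [Module R M], Prop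
  | 0 => fun M _ _ => Module.Injective R M
  | n+1 => fun M _ _ => ∃ (N : Type u) (_ : AddCommGroup N) (_ : Module R N) (f : M →ₗ[R] N),
      Module.Injective R N ∧ Function.Injective f ∧ InjDimLE R n (N ⧸ LinearMap.range f)

/-- Gorenstein local ring: Noetherian local ring of finite self-injective dimension. -/
def IsGorensteinLocalRing (R : Type u) [CommRing R] [IsLocalRing R] : Prop :=
  IsNoetherianRing R ∧ ∃ n : ℕ, InjDimLE R n R

/-- Vanishing of `Ext_R^n(M, N)`. -/
def ExtVanishes (R : Type u) [CommRing R] (M N : Type u) [AddCommGroup M] [Module R M]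
    [AddCommGroup N] [Module R N] (n : ℕ) : Prop :=
  Subsingleton ((((_root_.Ext R (ModuleCat.{u} R) n).obj
    (Opposite.op (ModuleCat.of R M))).obj (ModuleCat.of R N)))

section Rees
variable {R : Type u} [CommRing R]

/-- The linear embedding of `R^m` as the degree-one part of `R[X_1,…,X_m]`. -/
def toPoly (R : Type u) [CommRing R] (m : ℕ) : (Fin m → R) →ₗ[R] MvPolynomial (Fin m) R :=
  (Finsupp.linearCombination R MvPolynomial.X).comp
    (Finsupp.linearEquivFunOnFinite R R (Fin m)).symm.toLinearMap

/-- The Rees algebra of a module `E ⊆ R^m` with a rank: the `R`-subalgebra of the polynomial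
ring generated by the degree-one image of `E` (à la Eisenbud–Huneke–Ulrich). -/
def reesAlg {m : ℕ} (E : Submodule R (Fin m → R)) : Subalgebra R (MvPolynomial (Fin m) R) :=
  Algebra.adjoin R (toPoly R m '' E)

/-- `U` is a reduction of `E`: `U ≤ E` and the Rees algebra of `E` is integral over the
subalgebra generated by `U`. -/
def IsReductionOf {m : ℕ} (U E : Submodule R (Fin m → R)) : Prop :=
  U ≤ E ∧ ∀ x ∈ reesAlg E, IsIntegral (reesAlg U) x

/-- `U` is a minimal reduction of `E`. -/
def IsMinimalReductionOf {m : ℕ} (U E : Submodule R (Fin m → R)) : Prop :=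
  IsReductionOf U E ∧ ∀ V : Submodule R (Fin m → R), IsReductionOf V E → V ≤ U → V = U

/-- The core of `E`: the intersection of all (minimal) reductions of `E`. -/
def coreMod {m : ℕ} (E : Submodule R (Fin m → R)) : Submodule R (Fin m → R) :=
  sInf {U | IsReductionOf U E}

/-- The analytic spread of `E`: the Krull dimension of the special fiber ring
`k ⊗_R R(E)` of the Rees algebra of `E`. -/
def analyticSpread [IsLocalRing R] {m : ℕ} (E : Submodule R (Fin m → R)) : WithBot ℕ∞ :=
  ringKrullDim (↥(reesAlg E) ⧸ (Ideal.map (algebraMap R ↥(reesAlg E))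
    (IsLocalRing.maximalIdeal R)))

/-- The `j`-th Rees power `E^j`: the degree-`j` graded component of the Rees algebra. -/
def reesPow {m : ℕ} (E : Submodule R (Fin m → R)) (j : ℕ) :
    Submodule R (MvPolynomial (Fin m) R) :=
  Subalgebra.toSubmodule (reesAlg E) ⊓ MvPolynomial.homogeneousSubmodule (Fin m) R j

/-- The algebra map `R[Y_1,…,Y_q] → R[X_1,…,X_m]` induced by generators `g` of a submodule. -/
def mapOfGens {m : ℕ} (q : ℕ) (g : Fin q → (Fin m → R)) :
    MvPolynomial (Fin q) R →ₐ[R] MvPolynomial (Fin m) R :=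
  MvPolynomial.aeval fun j => toPoly R m (g j)

/-- The linear map `R^q → R^m` given by `v ↦ ∑ v_j g_j`. -/
def funComb {m : ℕ} (q : ℕ) (g : Fin q → (Fin m → R)) : (Fin q → R) →ₗ[R] (Fin m → R) :=
  (Finsupp.linearCombination R g).comp
    (Finsupp.linearEquivFunOnFinite R R (Fin q)).symm.toLinearMap

/-- `E` is of linear type: for every generating set, the defining ideal of its Rees algebra
is generated by the linear forms coming from the syzygies (i.e. `Sym(E) = R(E)`). -/
def IsLinearTypeSub {m : ℕ} (E : Submodule R (Fin m → R)) : Prop :=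
  ∀ (q : ℕ) (g : Fin q → (Fin m → R)), Submodule.span R (Set.range g) = E →
    RingHom.ker (mapOfGens q g).toRingHom =
      Ideal.span (toPoly R q '' (LinearMap.ker (funComb q g) : Set (Fin q → R)))

/-- The localization `E_p ⊆ R_p^m` of a submodule `E ⊆ R^m` at a prime `p`. -/
def locSub (p : PrimeSpectrum R) {m : ℕ} (E : Submodule R (Fin m → R)) :
    Submodule (Localization.AtPrime p.asIdeal) (Fin m → Localization.AtPrime p.asIdeal) :=
  Submodule.span (Localization.AtPrime p.asIdeal)
    ((fun (v : Fin m → R) (i : Fin m) => algebraMap R (Localization.AtPrime p.asIdeal) (v i)) ''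
      (E : Set (Fin m → R)))

/-- Orientability: `(∧^e M)^{**} ≅ R`. -/
def IsOrientable (R : Type u) [CommRing R] (M : Type u) [AddCommGroup M] [Module R M]
    (e : ℕ) : Prop :=
  Nonempty ((Module.Dual R (Module.Dual R (⋀[R]^e M))) ≃ₗ[R] R)

end Rees

/-!
Let `p` be a prime containing `U :_R E` with `ht p ≤ ℓ - e`, so that `E_p` is of linear type.
If `E_p ≠ U_p`, Nakayama gives a generator `y` of `E_p` outside `U_p + p E_p`, hence a linear
form `c` on `E_p ⊗ κ(p)` that kills `U_p` but not `y`. Because `E_p` is of linear type, the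
substitution `Y_j ↦ c(g_j) T` on the generators `g_j` kills the defining ideal of the Rees
algebra, so it induces a map `R(E_p) → κ(p)[T]` sending `R(U_p)` into `κ(p)` and `y` to
`c(y) T`. An integral equation of `y` over `R(U_p)` would then make `T` algebraic over `κ(p)`.
Hence `E_p = U_p`, i.e. `U :_R E ⊄ p`.
-/

section Rees
variable {R : Type u} [CommRing R] {m : ℕ}

theorem toPoly_apply (v : Fin m → R) : toPoly R m v = ∑ i, v i • MvPolynomial.X i := by
  simp [toPoly, Finsupp.linearCombination_apply, Finsupp.sum_fintype]

theorem funComb_apply {q : ℕ} (g : Fin q → Fin m → R) (v : Fin q → R) :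
    funComb q g v = ∑ j, v j • g j := by
  simp [funComb, Finsupp.linearCombination_apply, Finsupp.sum_fintype]

theorem map_toPoly {S : Type u} [CommRing S] (φ : R →+* S) (v : Fin m → R) :
    MvPolynomial.map φ (toPoly R m v) = toPoly S m (fun i => φ (v i)) := by
  simp [toPoly_apply, MvPolynomial.smul_eq_C_mul]

theorem map_mapOfGens {S : Type u} [CommRing S] (φ : R →+* S) {q : ℕ} (g : Fin q → Fin m → R)
    (F : MvPolynomial (Fin q) R) :
    MvPolynomial.map φ (mapOfGens q g F) =
      mapOfGens q (fun j i => φ (g j i)) (MvPolynomial.map φ F) := by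
  induction F using MvPolynomial.induction_on with
  | C a => simp [mapOfGens, MvPolynomial.algebraMap_eq]
  | add F G hF hG => simp only [map_add, hF, hG]
  | mul_X F j hF =>
    rw [map_mul, map_mul, hF, map_mul, MvPolynomial.map_X, map_mul]
    simp only [mapOfGens, MvPolynomial.aeval_X, map_toPoly]

theorem reesAlg_span (s : Set (Fin m → R)) :
    reesAlg (span R s) = Algebra.adjoin R (toPoly R m '' s) := by
  rw [reesAlg, ← Submodule.map_coe, Submodule.map_span, Algebra.adjoin_span]

theorem reesAlg_span_range {t : ℕ} (u : Fin t → Fin m → R) :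
    reesAlg (span R (Set.range u)) = (mapOfGens t u).range := by
  rw [reesAlg_span, ← Set.range_comp, mapOfGens, ← Algebra.adjoin_range_eq_range_aeval]
  rfl

theorem exists_monic_eval₂_mapOfGens_eq_zero {t : ℕ} (u : Fin t → Fin m → R)
    {x : MvPolynomial (Fin m) R} (hx : IsIntegral (reesAlg (span R (Set.range u))) x) :
    ∃ Q : Polynomial (MvPolynomial (Fin t) R), Q.Monic ∧
      Q.eval₂ (mapOfGens t u : MvPolynomial (Fin t) R →+* MvPolynomial (Fin m) R) x = 0 := by
  rw [reesAlg_span_range] at hx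
  obtain ⟨P, hPmonic, hPx⟩ := hx
  have hlifts : P ∈ Polynomial.lifts (mapOfGens t u).rangeRestrict.toRingHom :=
    Polynomial.lifts_iff_coeff_lifts P |>.mpr fun n =>
      (mapOfGens t u).rangeRestrict_surjective (P.coeff n)
  obtain ⟨Q, hQP, -, hQmonic⟩ := Polynomial.lifts_and_natDegree_eq_and_monic hlifts hPmonic
  refine ⟨Q, hQmonic, ?_⟩
  rwa [← hQP, Polynomial.eval₂_map] at hPx

end Rees

theorem IsLinearTypeSub.eval₂_eq_zero {S : Type u} [CommRing S] {m q : ℕ} {g : Fin q → Fin m → S}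
    (hg : IsLinearTypeSub (span S (Set.range g))) {A : Type*} [CommRing A] (φ : S →+* A)
    (a : Fin q → A) (ha : ∀ v ∈ LinearMap.ker (funComb q g), ∑ j, φ (v j) * a j = 0)
    {F : MvPolynomial (Fin q) S} (hF : mapOfGens q g F = 0) : MvPolynomial.eval₂ φ a F = 0 := by
  have hFker : F ∈ RingHom.ker (mapOfGens q g).toRingHom := hF
  rw [hg q g rfl] at hFker
  refine (Ideal.span_le.mpr ?_ : _ ≤ RingHom.ker (MvPolynomial.eval₂Hom φ a)) hFker
  rintro _ ⟨v, hv, rfl⟩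
  simpa [toPoly_apply, MvPolynomial.smul_eq_C_mul] using ha v hv

theorem eval₂_eval₂_rename_X_ne_zero {R K : Type*} [CommRing R] [CommRing K] [IsDomain K]
    {σ τ : Type*} (φ : R →+* K) (e : σ → τ) (c : τ → K) (hc : ∀ i, c (e i) = 0) {j₀ : τ}
    (hj₀ : c j₀ ≠ 0) {Q : Polynomial (MvPolynomial σ R)} (hQ : Q.Monic) :
    MvPolynomial.eval₂ (Polynomial.C.comp φ) (fun j => Polynomial.C (c j) * Polynomial.X)
      (Q.eval₂ (MvPolynomial.rename (R := R) e).toRingHom (MvPolynomial.X j₀)) ≠ 0 := by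
  have hrename : (MvPolynomial.eval₂Hom (Polynomial.C.comp φ)
      (fun j => Polynomial.C (c j) * Polynomial.X)).comp
        (MvPolynomial.rename (R := R) e).toRingHom =
      Polynomial.C.comp (φ.comp MvPolynomial.constantCoeff) := by
    ext <;> simp [hc]
  rw [← MvPolynomial.coe_eval₂Hom, Polynomial.hom_eval₂, hrename, ← Polynomial.eval₂_map,
    MvPolynomial.coe_eval₂Hom, MvPolynomial.eval₂_X, ← Polynomial.comp, Ne,
    Polynomial.comp_eq_zero_iff]
  rintro (h | ⟨-, h⟩)
  · exact (hQ.map _).ne_zero h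
  · simpa [hj₀] using congrArg (Polynomial.coeff · 1) h

instance IsLocalRing.instRingHomSurjectiveResidue {S : Type*} [CommRing S] [IsLocalRing S] :
    RingHomSurjective (residue S) :=
  ⟨residue_surjective⟩

section LocalRing
variable {S : Type u} [CommRing S] [IsLocalRing S] {m q : ℕ}

theorem mem_maximalIdeal_of_mem_ker_funComb {ι : Type*} {g : Fin q → Fin m → S}
    {e : ι → Fin q} {j₀ : Fin q}
    (hj₀ : g j₀ ∉ span S (Set.range (g ∘ e)) ⊔ maximalIdeal S • span S (Set.range g))
    {v : Fin q → S} (hv : v ∈ LinearMap.ker (funComb q g))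
    (hoff : ∀ j ∉ Set.range e, j ≠ j₀ → v j ∈ maximalIdeal S) : v j₀ ∈ maximalIdeal S := by
  classical
  by_contra hunit
  set D := span S (Set.range (g ∘ e)) ⊔ maximalIdeal S • span S (Set.range g)
  have hterm : ∀ j ≠ j₀, v j • g j ∈ D := by
    intro j hj
    by_cases hje : j ∈ Set.range e
    · obtain ⟨i, rfl⟩ := hje
      exact mem_sup_left (smul_mem _ _ (subset_span ⟨i, rfl⟩))
    · exact mem_sup_right (smul_mem_smul (hoff j hje hj) (subset_span ⟨j, rfl⟩))
  have hsum : v j₀ • g j₀ = -∑ j ∈ Finset.univ.erase j₀, v j • g j := by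
    rw [eq_neg_iff_add_eq_zero, Finset.add_sum_erase _ (fun j => v j • g j) (Finset.mem_univ j₀),
      ← funComb_apply]
    exact hv
  apply hj₀
  rw [← D.smul_mem_iff_of_isUnit (notMem_maximalIdeal.mp hunit), hsum]
  exact D.neg_mem (D.sum_mem fun j hj => hterm j (Finset.ne_of_mem_erase hj))

-- `c` encodes a linear form on `span S (range g) ⊗ κ` by its values on the generators `g j`.
theorem exists_residue_orthogonal_syzygies {ι : Type*} (g : Fin q → Fin m → S) (e : ι → Fin q)
    (j₀ : Fin q)
    (hj₀ : g j₀ ∉ span S (Set.range (g ∘ e)) ⊔ maximalIdeal S • span S (Set.range g)) :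
    ∃ c : Fin q → ResidueField S, c j₀ ≠ 0 ∧ (∀ i, c (e i) = 0) ∧
      ∀ v ∈ LinearMap.ker (funComb q g), ∑ j, residue S (v j) * c j = 0 := by
  classical
  let ρπ : (Fin q → S) →ₛₗ[residue S] (Fin q → ResidueField S) :=
    { toFun := fun v j => residue S (v j)
      map_add' := fun v w => by ext; simp
      map_smul' := fun a v => by ext; simp }
  set W := map ρπ (LinearMap.ker (funComb q g)) ⊔ Submodule.pi (Set.range e)ᶜ (fun _ => ⊥)
  have hj₀e : j₀ ∉ Set.range e := by
    rintro ⟨i, rfl⟩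
    exact hj₀ (mem_sup_left (subset_span ⟨i, rfl⟩))
  have hj₀W : Pi.single j₀ (1 : ResidueField S) ∉ W := by
    intro h
    obtain ⟨_, ⟨v, hv, rfl⟩, b, hb, hvb⟩ := mem_sup.mp h
    have hres : ∀ j ∉ Set.range e,
        residue S (v j) = (Pi.single j₀ (1 : ResidueField S) : Fin q → _) j := fun j hj => by
      rw [← hvb, Pi.add_apply, (mem_bot _).mp (hb j hj), add_zero]
      rfl
    have hv₀ := mem_maximalIdeal_of_mem_ker_funComb hj₀ hv fun j hj hne => by
      rw [← residue_eq_zero_iff, hres j hj, Pi.single_eq_of_ne hne]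
    rw [← residue_eq_zero_iff, hres j₀ hj₀e, Pi.single_eq_same] at hv₀
    exact one_ne_zero hv₀
  obtain ⟨f, hf, hfW⟩ := Submodule.exists_dual_map_eq_bot_of_notMem hj₀W inferInstance
  have hf0 : ∀ x ∈ W, f x = 0 := fun x hx => (mem_bot _).mp (hfW ▸ mem_map_of_mem hx)
  refine ⟨fun j => f (Pi.single j 1), hf, fun i => hf0 _ (mem_sup_right fun j hj => ?_),
    fun v hv => ?_⟩
  · exact (mem_bot _).mpr (Pi.single_eq_of_ne (fun h => hj ⟨i, h.symm⟩) _)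
  · have hsingle : ∀ i : Fin q,
        (fun j => if i = j then (1 : ResidueField S) else 0) = Pi.single i 1 :=
      fun i => by ext j; simp [Pi.single_apply, eq_comm]
    have := hf0 _ (mem_sup_left (mem_map_of_mem hv))
    rw [LinearMap.pi_apply_eq_sum_univ f] at this
    simp only [hsingle, smul_eq_mul] at this
    exact this

end LocalRing

section BaseChange
variable {R S : Type u} [CommRing R] [CommRing S] [Algebra R S] {m : ℕ}

theorem not_isIntegral_toPoly_of_isLinearTypeSub [IsLocalRing S] {t r : ℕ}
    (u : Fin t → Fin m → R) (f : Fin r → Fin m → R)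
    (hlin : IsLinearTypeSub
      (span S (Set.range fun j i => algebraMap R S (Fin.append u f j i))))
    {i₀ : Fin r}
    (hi₀ : (fun i => algebraMap R S (f i₀ i)) ∉
      span S (Set.range fun j i => algebraMap R S (u j i)) ⊔
        maximalIdeal S • span S (Set.range fun j i => algebraMap R S (Fin.append u f j i))) :
    ¬ IsIntegral (reesAlg (span R (Set.range u))) (toPoly R m (f i₀)) := by
  intro hint
  obtain ⟨Q, hQ, hQf⟩ := exists_monic_eval₂_mapOfGens_eq_zero u hint
  -- the integral equation of `f i₀`, in the variables of the generators `Fin.append u f`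
  set F := Q.eval₂ (MvPolynomial.rename (R := R) (Fin.castAdd r)).toRingHom
    (MvPolynomial.X (Fin.natAdd t i₀))
  have hF : mapOfGens (t + r) (Fin.append u f) F = 0 := by
    rw [← AlgHom.coe_toRingHom, Polynomial.hom_eval₂]
    convert hQf using 2
    · ext <;> simp [mapOfGens]
    · simp [mapOfGens]
  have hF' := map_mapOfGens (algebraMap R S) (Fin.append u f) F
  rw [hF, map_zero, eq_comm] at hF'
  obtain ⟨c, hc₀, hce, hcker⟩ := exists_residue_orthogonal_syzygies
    (fun j i => algebraMap R S (Fin.append u f j i)) (Fin.castAdd r) (Fin.natAdd t i₀)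
    (by simpa [Function.comp_def] using hi₀)
  have hev := hlin.eval₂_eq_zero (Polynomial.C.comp (residue S))
    (fun j => Polynomial.C (c j) * Polynomial.X) (fun v hv => by
      simp [← mul_assoc, ← map_mul, ← Finset.sum_mul, ← map_sum, hcker v hv]) hF'
  rw [MvPolynomial.eval₂_map, RingHom.comp_assoc] at hev
  exact eval₂_eval₂_rename_X_ne_zero _ _ c hce hc₀ hQ hev

theorem span_image_algebraMap_span (s : Set (Fin m → R)) :
    span S ((fun (v : Fin m → R) i => algebraMap R S (v i)) '' span R s) =
      span S ((fun (v : Fin m → R) i => algebraMap R S (v i)) '' s) := by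
  change span S ((LinearMap.pi fun i => Algebra.linearMap R S ∘ₗ LinearMap.proj i) '' _) = _
  rw [← map_coe, map_span, span_span_of_tower]
  rfl

theorem IsReductionOf.span_image_algebraMap_le [IsLocalRing S] {U E : Submodule R (Fin m → R)}
    (hUE : IsReductionOf U E) (hU : U.FG) (hE : E.FG)
    (hlin : IsLinearTypeSub (span S ((fun (v : Fin m → R) i => algebraMap R S (v i)) '' E))) :
    span S ((fun (v : Fin m → R) i => algebraMap R S (v i)) '' E) ≤
      span S ((fun (v : Fin m → R) i => algebraMap R S (v i)) '' U) := by
  obtain ⟨t, u, rfl⟩ := fg_iff_exists_fin_generating_family.mp hU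
  obtain ⟨r, f, rfl⟩ := fg_iff_exists_fin_generating_family.mp hE
  have hspan : span R (Set.range (Fin.append u f)) = span R (Set.range f) := by
    refine le_antisymm (span_le.mpr ?_) (span_mono fun _ ⟨i, hi⟩ => ⟨Fin.natAdd t i, by simpa⟩)
    rintro _ ⟨j, rfl⟩
    induction j using Fin.addCases with
    | left j => simpa using hUE.1 (subset_span (Set.mem_range_self j))
    | right i => simpa using subset_span (Set.mem_range_self (f := f) i)
  rw [← hspan] at hlin ⊢
  simp only [span_image_algebraMap_span, ← Set.range_comp, Function.comp_def] at hlin ⊢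
  apply le_of_le_smul_of_le_jacobson_bot (fg_span (Set.finite_range _))
    (maximalIdeal_le_jacobson _)
  rw [span_le]
  rintro _ ⟨j, rfl⟩
  induction j using Fin.addCases with
  | left j =>
    simp only [Fin.append_left]
    exact mem_sup_left (subset_span ⟨j, rfl⟩)
  | right i =>
    by_contra hi
    simp only [Fin.append_right] at hi
    exact not_isIntegral_toPoly_of_isLinearTypeSub u f hlin hi
      (hUE.2 _ (Algebra.subset_adjoin ⟨f i, subset_span ⟨i, rfl⟩, rfl⟩))

end BaseChange

theorem Submodule.exists_smul_mem_of_localized'_le {R S M N : Type*} [CommSemiring R]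
    [CommSemiring S] [AddCommMonoid M] [AddCommMonoid N] [Module R M] [Module R N] [Algebra R S]
    [Module S N] [IsScalarTower R S N] {p : Submonoid R} [IsLocalization p S] {f : M →ₗ[R] N}
    [IsLocalizedModule p f] {P Q : Submodule R M} (hP : P.FG)
    (h : P.localized' S p f ≤ Q.localized' S p f) : ∃ s ∈ p, ∀ x ∈ P, s • x ∈ Q := by
  induction P, hP using Submodule.fg_induction with
  | singleton x =>
    obtain ⟨q, hq, s, hs⟩ := h ⟨x, mem_span_singleton_self x, 1, IsLocalizedModule.mk'_one p f x⟩
    rw [← IsLocalizedModule.mk'_one p f x, IsLocalizedModule.mk'_eq_mk'_iff] at hs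
    obtain ⟨c, hc⟩ := hs
    refine ⟨c * s, (c * s).2, fun y hy => ?_⟩
    obtain ⟨a, rfl⟩ := mem_span_singleton.mp hy
    rw [smul_comm, mul_smul]
    refine Q.smul_mem a ?_
    rw [← Submonoid.smul_def, ← Submonoid.smul_def, hc, one_smul]
    exact Q.smul_of_tower_mem c hq
  | sup N₁ N₂ _ _ ih₁ ih₂ =>
    have hmono := (localized'gi S p f).gc.monotone_l
    obtain ⟨s₁, hs₁, h₁⟩ := ih₁ (h.trans' (hmono le_sup_left))
    obtain ⟨s₂, hs₂, h₂⟩ := ih₂ (h.trans' (hmono le_sup_right))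
    refine ⟨s₁ * s₂, mul_mem hs₁ hs₂, fun x hx => ?_⟩
    obtain ⟨y, hy, z, hz, rfl⟩ := mem_sup.mp hx
    rw [smul_add]
    exact Q.add_mem (by rw [mul_comm, mul_smul]; exact Q.smul_mem _ (h₁ y hy))
      (by rw [mul_smul]; exact Q.smul_mem _ (h₂ z hz))

section Localization
variable {R : Type u} [CommRing R] {m : ℕ}

theorem locSub_eq_localized' (p : PrimeSpectrum R) (N : Submodule R (Fin m → R)) :
    locSub p N = N.localized' (Localization.AtPrime p.asIdeal) p.asIdeal.primeCompl
      (LinearMap.pi fun i => Algebra.linearMap R _ ∘ₗ LinearMap.proj i) := by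
  rw [localized'_eq_span]
  rfl

theorem IsReductionOf.colon_not_le_of_isLinearTypeSub [IsNoetherianRing R]
    {U E : Submodule R (Fin m → R)} (hUE : IsReductionOf U E) {p : PrimeSpectrum R}
    (hlin : IsLinearTypeSub (locSub p E)) : ¬ U.colon E ≤ p.asIdeal := by
  have hle : locSub p E ≤ locSub p U :=
    hUE.span_image_algebraMap_le (IsNoetherian.noetherian U) (IsNoetherian.noetherian E) hlin
  rw [locSub_eq_localized', locSub_eq_localized'] at hle
  obtain ⟨s, hs, hsE⟩ := exists_smul_mem_of_localized'_le (IsNoetherian.noetherian E) hle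
  exact fun hcolon => hs (hcolon (mem_colon.mpr hsE))

end Localization

theorem colon_of_min_reduction_is_residual_intersection_general {R : Type u} [CommRing R]
    [IsNoetherianRing R] {m : ℕ} (E : Submodule R (Fin m → R)) (e ℓ : ℕ)
    (U : Submodule R (Fin m → R)) (hU : IsMinimalReductionOf U E)
    (hlt : ∀ p : PrimeSpectrum R, Order.height p ≤ (ℓ - e : ℕ) →
      IsLinearTypeSub (locSub p E)) :
    (ℓ : ℕ∞) + 1 ≤ (U.colon E).ht + e := by
  have hht : ((ℓ - e : ℕ) : ℕ∞) + 1 ≤ (U.colon E).ht := le_iInf₂ fun p hp => by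
    by_contra! hlow
    have hlin := hlt p ((ENat.lt_add_one_iff (ENat.natCast_ne_top _)).mp hlow)
    exact hU.1.colon_not_le_of_isLinearTypeSub hlin hp
  calc (ℓ : ℕ∞) + 1 ≤ ((ℓ - e : ℕ) : ℕ∞) + 1 + e := by norm_cast; omega
    _ ≤ (U.colon E).ht + e := by gcongr

/-- Remark 2.4. Let `(R,m)` be Noetherian local with infinite residue
field, `E` (realized as a submodule of a free module) a finitely generated module with
rank `e` and analytic spread `ℓ`, admitting a proper reduction. If `U` is a minimal
reduction of `E` and `E_p` is of linear type for all primes `p` with `ht p ≤ ℓ - e`,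
then `ht (U :_R E) ≥ ℓ - e + 1`, i.e. `(U :_R E)` is an `ℓ`-residual intersection. -/
theorem colon_of_min_reduction_is_residual_intersection {R : Type u} [CommRing R]
    [IsLocalRing R] [IsNoetherianRing R] (hk : Infinite (IsLocalRing.ResidueField R))
    {m : ℕ} (E : Submodule R (Fin m → R)) [Module.Finite R ↥E]
    (e ℓ : ℕ) (hrk : Module.HasRank R ↥E e) (hl : analyticSpread E = (ℓ : WithBot ℕ∞))
    (hproper : ∃ V : Submodule R (Fin m → R), IsReductionOf V E ∧ V ≠ E)
    (U : Submodule R (Fin m → R)) (hU : IsMinimalReductionOf U E)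
    (hlt : ∀ p : PrimeSpectrum R, Order.height p ≤ (ℓ - e : ℕ) →
      IsLinearTypeSub (locSub p E)) :
    (ℓ : ℕ∞) + 1 ≤ (U.colon E).ht + e :=
  colon_of_min_reduction_is_residual_intersection_general E e ℓ U hU hlt

end
end

section
/- Let R be a Noetherian local ring with infinite residue field, E a finitely generated R-module with a rank, and suppose (U :_R E)E = core(E) holds for every minimal reduction U of E. Then the colon ideal (U :_R E) is independent of the minimal reduction U: for any two minimal reductions U_1, U_2 of E, (U_1 :_R E) = (U_2 :_R E). -/
noncomputable section
open Submodule IsLocalRing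

universe u

namespace Submodule

variable {R M : Type*} [CommSemiring R] [AddCommMonoid M] [Module R M]

theorem le_colon_iff_smul_le {I : Ideal R} {N P : Submodule R M} :
    I ≤ N.colon (P : Set M) ↔ I • P ≤ N :=
  ⟨fun h => smul_le.2 fun _ hr p hp => mem_colon.1 (h hr) p hp,
    fun h r hr => mem_colon.2 fun p hp => smul_le.1 h r hr p hp⟩

end Submodule

section Core

variable {R : Type u} [CommRing R] {m : ℕ} {U V E : Submodule R (Fin m → R)}

theorem IsReductionOf.coreMod_le (hU : IsReductionOf U E) : coreMod E ≤ U :=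
  sInf_le hU

theorem colon_le_colon_of_smul_eq_coreMod (hV : V.colon E • E = coreMod E)
    (hU : IsReductionOf U E) : V.colon E ≤ U.colon E :=
  le_colon_iff_smul_le.2 (hV.le.trans hU.coreMod_le)

end Core

theorem colon_independent_of_min_reduction_general {R : Type u} [CommRing R]
    {m : ℕ} (E : Submodule R (Fin m → R))
    (hcore : ∀ U : Submodule R (Fin m → R), IsMinimalReductionOf U E →
      (U.colon E) • E = coreMod E) :
    ∀ U₁ U₂ : Submodule R (Fin m → R), IsMinimalReductionOf U₁ E →
      IsMinimalReductionOf U₂ E → U₁.colon E = U₂.colon E :=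
  fun U₁ U₂ h₁ h₂ => le_antisymm (colon_le_colon_of_smul_eq_coreMod (hcore U₁ h₁) h₂.1)
    (colon_le_colon_of_smul_eq_coreMod (hcore U₂ h₂) h₁.1)

/-- (ii) ⇒ (iii) in Theorem 4.3. Over a Noetherian local ring with
infinite residue field, if `(U :_R E) E = core(E)` for every minimal reduction `U` of
`E`, then the colon ideal `(U :_R E)` is independent of the minimal reduction `U`. -/
theorem colon_independent_of_min_reduction {R : Type u} [CommRing R] [IsLocalRing R]
    [IsNoetherianRing R] (hk : Infinite (IsLocalRing.ResidueField R))
    {m : ℕ} (E : Submodule R (Fin m → R)) [Module.Finite R ↥E]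
    (e : ℕ) (hrk : Module.HasRank R ↥E e)
    (hcore : ∀ U : Submodule R (Fin m → R), IsMinimalReductionOf U E →
      (U.colon E) • E = coreMod E) :
    ∀ U₁ U₂ : Submodule R (Fin m → R), IsMinimalReductionOf U₁ E →
      IsMinimalReductionOf U₂ E → U₁.colon E = U₂.colon E :=
  colon_independent_of_min_reduction_general E hcore

end
end
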